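/- The square of the Sierpinski (Pascal mod 2) matrix has entries: letting Z(n,m) = 1 iff every binary digit of n is ≥ the corresponding digit of m (else 0), the (n,m) entry of the matrix product Σ_k Z(n,k)·Z(k,m) equals Z(n,m) · 2^{s(n-m)} when Z(n,m) = 1, where s(r) is the binary digit sum of r; i.e., Σ_{k} Z(n,k)·Z(k,m) = Z(n,m)·2^{s_2(n ⊖ m)} where n ⊖ m has digits n_i - m_i. Equivalently: for n with binary digits n_i, Σ_{m=0}^n (Σ_k Z(n,k)Z(k,m))·x^m = ∏_{i=0}^∞ (2 + x^{2^i})^{n_i}. -/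

import Mathlib

/-!
Identifying a natural number with the finite set of its binary digits, `Z n m = 1` exactly when
`m ⊆ n`. Expanding `∏ i ∈ s, (1 + y i) = ∑ t ⊆ s, ∏ i ∈ t, y i` once gives
`∑ m ⊆ k, x ^ m = ∏ i ∈ k, (1 + x ^ 2 ^ i)`, and expanding it a second time gives
`∑ k ⊆ n, ∑ m ⊆ k, x ^ m = ∏ i ∈ n, (2 + x ^ 2 ^ i)`.
-/

open Classical in
/-- Pascal triangle mod 2 (Sierpinski matrix): `Z(n,m) = 1` iff every binary digit of `n`
is ≥ the corresponding binary digit of `m`. -/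
noncomputable def Z (n m : ℕ) : ℕ :=
  if ∀ i : ℕ, m / 2 ^ i % 2 ≤ n / 2 ^ i % 2 then 1 else 0

open Finset

theorem Nat.div_two_pow_mod_two_eq_ite (n i : ℕ) :
    n / 2 ^ i % 2 = if n.testBit i then 1 else 0 := by
  have h := n.testBit_eq_decide_div_mod_eq (i := i)
  split_ifs <;> simp_all

theorem Nat.le_of_equivBitIndices_subset {m n : ℕ} (h : equivBitIndices m ⊆ equivBitIndices n) :
    m ≤ n := by
  have := sum_le_sum_of_subset (f := (2 ^ ·)) h
  simp only [equivBitIndices_apply, Finset.sum_toFinset_bitIndices_two_pow] at this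
  exact this

theorem Nat.div_two_pow_mod_two_le_iff_subset {m n : ℕ} :
    (∀ i, m / 2 ^ i % 2 ≤ n / 2 ^ i % 2) ↔ equivBitIndices m ⊆ equivBitIndices n := by
  simp only [Nat.div_two_pow_mod_two_eq_ite, subset_iff, equivBitIndices_apply,
    List.mem_toFinset, Nat.mem_bitIndices]
  refine forall_congr' fun i => ?_
  cases m.testBit i <;> cases n.testBit i <;> simp

theorem Z_eq_ite_subset (n m : ℕ) :
    Z n m = if equivBitIndices m ⊆ equivBitIndices n then 1 else 0 := by
  simp only [Z, Nat.div_two_pow_mod_two_le_iff_subset]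

theorem sum_range_Z_smul {M : Type*} [AddCommMonoid M] (f : ℕ → M) {n L : ℕ} (hn : n < L) :
    ∑ k ∈ range L, Z n k • f k = ∑ t ∈ (equivBitIndices n).powerset, f (∑ i ∈ t, 2 ^ i) := by
  simp only [Z_eq_ite_subset, ite_smul, one_smul, zero_smul, ← sum_filter]
  refine sum_equiv equivBitIndices (fun k => ?_) (fun k _ => by simp)
  simp only [mem_filter, mem_range, mem_powerset, and_iff_right_iff_imp]
  exact fun h => (Nat.le_of_equivBitIndices_subset h).trans_lt hn

theorem sum_powerset_pow_sum_two_pow {R : Type*} [CommSemiring R] (x : R) (s : Finset ℕ) :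
    ∑ t ∈ s.powerset, x ^ (∑ i ∈ t, 2 ^ i) = ∏ i ∈ s, (1 + x ^ 2 ^ i) := by
  simp [prod_one_add, prod_pow_eq_pow_sum]

theorem prod_pow_div_two_pow_mod_two {M : Type*} [CommMonoid M] (f : ℕ → M) {n N : ℕ}
    (hn : n < 2 ^ N) :
    ∏ i ∈ range N, f i ^ (n / 2 ^ i % 2) = ∏ i ∈ equivBitIndices n, f i := by
  have hlt {i : ℕ} (hi : n.testBit i) : i < N :=
    (Nat.pow_lt_pow_iff_right one_lt_two).1
      ((Nat.two_pow_le_of_mem_bitIndices (Nat.mem_bitIndices.2 hi)).trans_lt hn)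
  simp only [Nat.div_two_pow_mod_two_eq_ite, pow_ite, pow_one, pow_zero, ← prod_filter]
  refine prod_congr (ext fun i => ?_) fun _ _ => rfl
  simpa using hlt

theorem sum_sum_Z_mul_Z_smul_pow {R : Type*} [CommSemiring R] (x : R) {n L : ℕ} (hn : n < L) :
    ∑ m ∈ range L, (∑ k ∈ range L, Z n k * Z k m) • x ^ m =
      ∏ i ∈ equivBitIndices n, (2 + x ^ 2 ^ i) := by
  calc ∑ m ∈ range L, (∑ k ∈ range L, Z n k * Z k m) • x ^ m
      = ∑ k ∈ range L, Z n k • ∑ m ∈ range L, Z k m • x ^ m := by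
        simp only [sum_smul, smul_sum, mul_smul]
        exact sum_comm
    _ = ∑ k ∈ range L, Z n k • ∏ i ∈ equivBitIndices k, (1 + x ^ 2 ^ i) := by
        refine sum_congr rfl fun k hk => ?_
        rw [sum_range_Z_smul _ (mem_range.1 hk), sum_powerset_pow_sum_two_pow]
    _ = ∏ i ∈ equivBitIndices n, (1 + (1 + x ^ 2 ^ i)) := by
        rw [sum_range_Z_smul (fun k => ∏ i ∈ equivBitIndices k, (1 + x ^ 2 ^ i)) hn, prod_one_add]
        simp only [equivBitIndices_apply, toFinset_bitIndices_sum_two_pow]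
    _ = ∏ i ∈ equivBitIndices n, (2 + x ^ 2 ^ i) := by
        simp only [← add_assoc, one_add_one_eq_two]

open Polynomial in
theorem stmt14 (n N : ℕ) (hN : n < 2 ^ N) :
    ∑ m ∈ Finset.range (n + 1),
        Polynomial.C ((∑ k ∈ Finset.range (n + 1), Z n k * Z k m : ℕ) : ℤ) * X ^ m =
      ∏ i ∈ Finset.range N, (2 + X ^ 2 ^ i) ^ (n / 2 ^ i % 2) := by
  rw [prod_pow_div_two_pow_mod_two _ hN, ← sum_sum_Z_mul_Z_smul_pow X n.lt_succ_self]
  simp only [map_natCast, nsmul_eq_mul]
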